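/- Global existence and dissipativity of the FitzHugh-Nagumo lattice with boundary feedback: consider the ODE system on ℝ^{2n}, x_i' = a(x_{i-1} - 2x_i + x_{i+1}) + f(x_i) - b y_i + p u_i, y_i' = c x_i - δ y_i for 1 ≤ i ≤ n, with periodic boundary x₀ = x_n, x_{n+1} = x₁, feedback u₁ = x_n - x₁, u_n = x₁ - x_n, u_i = 0 otherwise, where a, b, c, δ, p > 0, f ∈ C¹ satisfies f(s)s ≤ -λs⁴ + β and f'(s) ≤ γ with λ, β, γ > 0. Then every solution exists globally on [0,∞) and satisfies ∑_{i=1}^n (x_i(t)² + y_i(t)²) ≤ (1/min{C₁,1})·[e^{-δt}·∑_{i=1}^n (C₁ x_i(0)² + y_i(0)²) + (n/δ)(C₂ + δβ/b)], where C₁ = δ/(2b) and C₂ = (b/(4δλ))(δ²/(2b) + δ/2 + 2c²/δ)². -/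

import Mathlib

/-!
With `C₁ = δ / (2b)` the energy `E = ∑ (C₁ xᵢ² + yᵢ²)` satisfies `E' + δ E ≤ n (C₂ + δβ / b)`:
the periodic discrete Laplacian and the boundary feedback are dissipative
(`∑ xᵢ Δxᵢ ≤ 0`, `∑ xᵢ uᵢ = -(x₁ - xₙ)² ≤ 0`), and at each site the remaining terms are
`(δ / b) f(xᵢ) xᵢ + (δ² / 2b) xᵢ² + (2c - δ) xᵢ yᵢ - δ yᵢ²`; Young's inequality bounds the cross
term by a multiple of `xᵢ²`, and the quartic decay `-λ xᵢ⁴` from `f` absorbs all of `xᵢ²`.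
Grönwall's inequality then bounds `E t`, and `E ≥ min C₁ 1 · ∑ (xᵢ² + yᵢ²)`.
-/

open Finset Real

section PeriodicSums

variable {M : Type*} [AddCancelCommMonoid M] {n : ℕ} {g : ℕ → M}

theorem sum_Icc_one_comp_succ_of_periodic (hg : g (n + 1) = g 1) :
    ∑ i ∈ Icc 1 n, g (i + 1) = ∑ i ∈ Icc 1 n, g i := by
  have h := sum_range_succ (fun k => g (1 + k)) n
  rw [sum_range_succ', add_comm 1 n, hg, add_left_inj] at h
  simpa only [← Ico_add_one_right_eq_Icc, sum_Ico_eq_sum_range, add_tsub_cancel_right,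
    add_comm 1, add_assoc] using h

theorem sum_Icc_one_comp_pred_of_periodic (hg : g 0 = g n) :
    ∑ i ∈ Icc 1 n, g (i - 1) = ∑ i ∈ Icc 1 n, g i := by
  simpa using (sum_Icc_one_comp_succ_of_periodic (g := fun j => g (j - 1)) (n := n)
    (by simpa using hg.symm)).symm

end PeriodicSums

def discreteLaplacian (u : ℕ → ℝ) (i : ℕ) : ℝ := u (i - 1) - 2 * u i + u (i + 1)

theorem sum_mul_discreteLaplacian_nonpos {n : ℕ} {u : ℕ → ℝ} (h0 : u 0 = u n)
    (h1 : u (n + 1) = u 1) : ∑ i ∈ Icc 1 n, u i * discreteLaplacian u i ≤ 0 := by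
  have hpt : ∀ i ∈ Icc 1 n,
      u i * discreteLaplacian u i ≤ u (i - 1) ^ 2 / 2 + u (i + 1) ^ 2 / 2 - u i ^ 2 := by
    intro i _
    unfold discreteLaplacian
    nlinarith [sq_nonneg (u i - u (i - 1)), sq_nonneg (u i - u (i + 1))]
  have hcancel : ∑ i ∈ Icc 1 n, (u (i - 1) ^ 2 / 2 + u (i + 1) ^ 2 / 2 - u i ^ 2) = 0 := by
    rw [sum_sub_distrib, sum_add_distrib, ← sum_div, ← sum_div,
      sum_Icc_one_comp_pred_of_periodic (g := fun j => u j ^ 2) (by rw [h0]),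
      sum_Icc_one_comp_succ_of_periodic (g := fun j => u j ^ 2) (by rw [h1])]
    ring
  exact (sum_le_sum hpt).trans hcancel.le

def boundaryFeedback (n : ℕ) (u : ℕ → ℝ) (i : ℕ) : ℝ :=
  if i = 1 then u n - u 1 else if i = n then u 1 - u n else 0

theorem sum_mul_boundaryFeedback_nonpos (n : ℕ) (u : ℕ → ℝ) :
    ∑ i ∈ Icc 1 n, u i * boundaryFeedback n u i ≤ 0 := by
  rcases lt_or_ge n 2 with hn | hn
  · interval_cases n <;> simp [boundaryFeedback]
  · rw [sum_eq_add 1 n (by omega)]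
    · rw [boundaryFeedback, boundaryFeedback, if_pos rfl, if_neg (show n ≠ 1 by omega), if_pos rfl]
      nlinarith [sq_nonneg (u 1 - u n)]
    · intro i _ hi
      simp [boundaryFeedback, hi.1, hi.2]
    · exact fun h => (h (mem_Icc.2 ⟨le_rfl, by omega⟩)).elim
    · exact fun h => (h (mem_Icc.2 ⟨by omega, le_rfl⟩)).elim

theorem neg_mul_pow_four_add_mul_sq_le {A : ℝ} (hA : 0 < A) (K X : ℝ) :
    -A * X ^ 4 + K * X ^ 2 ≤ K ^ 2 / (4 * A) := by
  rw [le_div_iff₀ (by positivity)]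
  nlinarith [sq_nonneg (K - 2 * A * X ^ 2)]

theorem cross_term_le {δ : ℝ} (hδ : 0 < δ) (c X Y : ℝ) :
    (2 * c - δ) * X * Y - δ * Y ^ 2 ≤ (2 * c ^ 2 / δ + δ / 2) * X ^ 2 := by
  have hsq : 2 * δ * ((2 * c ^ 2 / δ + δ / 2) * X ^ 2 - ((2 * c - δ) * X * Y - δ * Y ^ 2))
      = (2 * c * X - δ * Y) ^ 2 + δ ^ 2 * (X + Y) ^ 2 := by
    field_simp; ring
  nlinarith [sq_nonneg (2 * c * X - δ * Y), sq_nonneg (X + Y)]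

theorem le_exp_neg_mul_add_div_of_hasDerivAt {E E' : ℝ → ℝ} {δ M : ℝ} (hδ : 0 < δ) (hM : 0 ≤ M)
    (hE : ∀ s ≥ 0, HasDerivAt E (E' s) s) (hE' : ∀ s ≥ 0, E' s + δ * E s ≤ M)
    {t : ℝ} (ht : 0 ≤ t) : E t ≤ exp (-δ * t) * E 0 + M / δ := by
  have hgron := le_gronwallBound_of_liminf_deriv_right_le (f := E) (K := -δ) (ε := M)
    (a := 0) (b := t) (fun s hs => (hE s hs.1).continuousAt.continuousWithinAt)
    (fun s hs _ hr => (hE s hs.1).hasDerivWithinAt.liminf_right_slope_le hr) le_rfl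
    (fun s hs => by linarith [hE' s hs.1]) t ⟨ht, le_rfl⟩
  rw [gronwallBound_of_K_ne_0 (neg_ne_zero.2 hδ.ne'), sub_zero] at hgron
  have : M / -δ * (exp (-δ * t) - 1) ≤ M / δ := by
    rw [div_neg, neg_mul, ← mul_neg, neg_sub]
    exact mul_le_of_le_one_right (div_nonneg hM hδ.le)
      (sub_le_self _ (exp_pos _).le)
  linarith

theorem fhn_reaction_le {b c δ lam β F X : ℝ} (hb : 0 < b) (hδ : 0 < δ) (hlam : 0 < lam)
    (hF : F * X ≤ -lam * X ^ 4 + β) (Y : ℝ) :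
    δ / b * (F * X) + δ ^ 2 / (2 * b) * X ^ 2 + ((2 * c - δ) * X * Y - δ * Y ^ 2)
      ≤ b / (4 * δ * lam) * (δ ^ 2 / (2 * b) + δ / 2 + 2 * c ^ 2 / δ) ^ 2 + δ * β / b := by
  set K := δ ^ 2 / (2 * b) + δ / 2 + 2 * c ^ 2 / δ
  have hreact : δ / b * (F * X) ≤ -(δ * lam / b) * X ^ 4 + δ * β / b := by
    calc δ / b * (F * X) ≤ δ / b * (-lam * X ^ 4 + β) := by gcongr
      _ = -(δ * lam / b) * X ^ 4 + δ * β / b := by ring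
  have hquart := neg_mul_pow_four_add_mul_sq_le (A := δ * lam / b) (by positivity) K X
  have hK : K ^ 2 / (4 * (δ * lam / b)) = b / (4 * δ * lam) * K ^ 2 := by
    field_simp
  have hcross := cross_term_le hδ c X Y
  have hsplit : δ ^ 2 / (2 * b) * X ^ 2 + (2 * c ^ 2 / δ + δ / 2) * X ^ 2 = K * X ^ 2 := by ring
  linarith

theorem hasDerivAt_sum_mul_sq_add_sq {ι : Type*} (s : Finset ι) (C : ℝ) {x y : ι → ℝ → ℝ}
    {x' y' : ι → ℝ} {t : ℝ} (hx : ∀ i ∈ s, HasDerivAt (x i) (x' i) t)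
    (hy : ∀ i ∈ s, HasDerivAt (y i) (y' i) t) :
    HasDerivAt (fun t => ∑ i ∈ s, (C * x i t ^ 2 + y i t ^ 2))
      (∑ i ∈ s, (C * (2 * x i t * x' i) + 2 * y i t * y' i)) t := by
  refine HasDerivAt.fun_sum fun i hi => ?_
  exact ((((hx i hi).pow 2).const_mul C).add ((hy i hi).pow 2)).congr_deriv (by simp)

theorem fhn_energy_dissipation {n : ℕ} {a b c δ p lam β : ℝ} (ha : 0 ≤ a) (hb : 0 < b)
    (hδ : 0 < δ) (hp : 0 ≤ p) (hlam : 0 < lam) {f : ℝ → ℝ}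
    (hf : ∀ s, f s * s ≤ -lam * s ^ 4 + β) {X Y : ℕ → ℝ} (h0 : X 0 = X n)
    (h1 : X (n + 1) = X 1) :
    ∑ i ∈ Icc 1 n, (δ / (2 * b) * (2 * X i *
        (a * discreteLaplacian X i + f (X i) - b * Y i + p * boundaryFeedback n X i))
        + 2 * Y i * (c * X i - δ * Y i))
      + δ * ∑ i ∈ Icc 1 n, (δ / (2 * b) * X i ^ 2 + Y i ^ 2)
      ≤ n * (b / (4 * δ * lam) * (δ ^ 2 / (2 * b) + δ / 2 + 2 * c ^ 2 / δ) ^ 2 + δ * β / b) := by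
  have hdiff := mul_nonpos_of_nonneg_of_nonpos (by positivity : 0 ≤ δ / b * a)
    (sum_mul_discreteLaplacian_nonpos h0 h1)
  have hfeed := mul_nonpos_of_nonneg_of_nonpos (by positivity : 0 ≤ δ / b * p)
    (sum_mul_boundaryFeedback_nonpos n X)
  have hreact := sum_le_sum fun i (_ : i ∈ Icc 1 n) =>
    fhn_reaction_le (c := c) hb hδ hlam (hf (X i)) (Y i)
  rw [sum_const, Nat.card_Icc, add_tsub_cancel_right, nsmul_eq_mul] at hreact
  calc _ = δ / b * a * ∑ i ∈ Icc 1 n, X i * discreteLaplacian X i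
        + δ / b * p * ∑ i ∈ Icc 1 n, X i * boundaryFeedback n X i
        + ∑ i ∈ Icc 1 n, (δ / b * (f (X i) * X i) + δ ^ 2 / (2 * b) * X i ^ 2
          + ((2 * c - δ) * X i * Y i - δ * Y i ^ 2)) := by
        simp only [mul_sum, ← sum_add_distrib]
        refine sum_congr rfl fun i _ => ?_
        field_simp
        ring
    _ ≤ _ := by linarith

theorem fhn_global_existence_dissipative_general
    (n : ℕ)
    (a b c δ p lam β : ℝ)
    (ha : 0 < a) (hb : 0 < b) (hδ : 0 < δ) (hp : 0 < p)
    (hlam : 0 < lam) (hβ : 0 < β)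
    (f : ℝ → ℝ)
    (hf1 : ∀ s : ℝ, f s * s ≤ -lam * s^4 + β)
    (x y : ℕ → ℝ → ℝ)
    (hbx0 : ∀ t : ℝ, x 0 t = x n t) (hbx1 : ∀ t : ℝ, x (n + 1) t = x 1 t)
    (hxode : ∀ i ∈ Finset.Icc 1 n, ∀ t ≥ (0:ℝ),
      HasDerivAt (x i)
        (a * (x (i - 1) t - 2 * x i t + x (i + 1) t) + f (x i t) - b * y i t
          + p * (if i = 1 then x n t - x 1 t else if i = n then x 1 t - x n t else 0)) t)
    (hyode : ∀ i ∈ Finset.Icc 1 n, ∀ t ≥ (0:ℝ),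
      HasDerivAt (y i) (c * x i t - δ * y i t) t) :
    ∀ t ≥ (0:ℝ),
      (∑ i ∈ Finset.Icc 1 n, ((x i t)^2 + (y i t)^2))
        ≤ (1 / min (δ / (2 * b)) 1) *
          (Real.exp (-δ * t) * (∑ i ∈ Finset.Icc 1 n,
              ((δ / (2 * b)) * (x i 0)^2 + (y i 0)^2))
            + (n / δ) * ((b / (4 * δ * lam)) * (δ^2 / (2 * b) + δ / 2 + 2 * c^2 / δ)^2
                + δ * β / b)) := by
  intro t ht
  set C₁ := δ / (2 * b)
  have hC₁ : 0 < min C₁ 1 := lt_min (by positivity) one_pos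
  have hE := le_exp_neg_mul_add_div_of_hasDerivAt hδ (by positivity)
    (fun s hs => hasDerivAt_sum_mul_sq_add_sq _ C₁ (fun i hi => hxode i hi s hs)
      (fun i hi => hyode i hi s hs))
    (fun s _ => fhn_energy_dissipation (c := c) ha.le hb hδ hp.le hlam hf1 (hbx0 s) (hbx1 s)) ht
  have hmin : min C₁ 1 * ∑ i ∈ Icc 1 n, (x i t ^ 2 + y i t ^ 2)
      ≤ ∑ i ∈ Icc 1 n, (C₁ * x i t ^ 2 + y i t ^ 2) := by
    rw [mul_sum]
    refine sum_le_sum fun i _ => ?_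
    rw [mul_add]
    gcongr
    · exact min_le_left C₁ 1
    · exact mul_le_of_le_one_left (sq_nonneg _) (min_le_right C₁ 1)
  rw [one_div, ← div_eq_inv_mul, le_div_iff₀' hC₁]
  rw [mul_div_right_comm] at hE
  exact hmin.trans hE

/-- Global existence (formalized as: the solution is defined for all `t ≥ 0`,
which is built into the hypotheses) and the dissipative estimate for the
FitzHugh-Nagumo lattice system with boundary feedback. -/
theorem fhn_global_existence_dissipative
    (n : ℕ) (hn : 4 ≤ n)
    (a b c δ p lam β γ : ℝ)
    (ha : 0 < a) (hb : 0 < b) (hc : 0 < c) (hδ : 0 < δ) (hp : 0 < p)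
    (hlam : 0 < lam) (hβ : 0 < β) (hγ : 0 < γ)
    (f : ℝ → ℝ) (hf : ContDiff ℝ 1 f)
    (hf1 : ∀ s : ℝ, f s * s ≤ -lam * s^4 + β)
    (hf2 : ∀ s : ℝ, deriv f s ≤ γ)
    (x y : ℕ → ℝ → ℝ)
    (hbx0 : ∀ t : ℝ, x 0 t = x n t) (hbx1 : ∀ t : ℝ, x (n + 1) t = x 1 t)
    (hxode : ∀ i ∈ Finset.Icc 1 n, ∀ t ≥ (0:ℝ),
      HasDerivAt (x i)
        (a * (x (i - 1) t - 2 * x i t + x (i + 1) t) + f (x i t) - b * y i t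
          + p * (if i = 1 then x n t - x 1 t else if i = n then x 1 t - x n t else 0)) t)
    (hyode : ∀ i ∈ Finset.Icc 1 n, ∀ t ≥ (0:ℝ),
      HasDerivAt (y i) (c * x i t - δ * y i t) t) :
    ∀ t ≥ (0:ℝ),
      (∑ i ∈ Finset.Icc 1 n, ((x i t)^2 + (y i t)^2))
        ≤ (1 / min (δ / (2 * b)) 1) *
          (Real.exp (-δ * t) * (∑ i ∈ Finset.Icc 1 n,
              ((δ / (2 * b)) * (x i 0)^2 + (y i 0)^2))
            + (n / δ) * ((b / (4 * δ * lam)) * (δ^2 / (2 * b) + δ / 2 + 2 * c^2 / δ)^2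
                + δ * β / b)) :=
  fhn_global_existence_dissipative_general n a b c δ p lam β ha hb hδ hp hlam hβ f hf1 x y hbx0 hbx1
    hxode hyode
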